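/- Let (L, φ) be a Lie algebra and r ∈ L ⊗ L with r ∈ Im(1⊗1 − τ). The coboundary map Δ_r(x) = x·r (diagonal adjoint action) defines a Lie cobracket making (L, φ, Δ_r) a Lie bialgebra if and only if x·c(r) = 0 for all x ∈ L, where c(r) = [r¹²,r¹³] + [r¹²,r²³] + [r¹³,r²³]. -/

import Mathlib

/-!
`Δ_r(x) = x·r` is the coboundary of `r` in the Lie module `L ⊗ L`, so the cocycle condition is
`⁅⁅x, y⁆, r⁆ = ⁅x, ⁅y, r⁆⁆ - ⁅y, ⁅x, r⁆⁆`, and `Δ_r` lands in `Im(1 ⊗ 1 − τ)` because `τ` is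
`L`-equivariant. The content is the co-Jacobi identity: for antisymmetric `r`, the cyclic sum of
`(1 ⊗ Δ_r)(Δ_r x)` equals `x·c(r)`. Both sides are quadratic in `r`; the polarization of their
difference is a symmetric bilinear form which vanishes on the generators `a ⊗ b − b ⊗ a` of
`Im(1 ⊗ 1 − τ)` by a direct expansion with the Jacobi identity, hence on all of `Im(1 ⊗ 1 − τ)`,
and dividing by `2` gives back the quadratic identity.
-/

open TensorProduct

attribute [local instance 100] LieRing.ofAssociativeRing

section

variable (F : Type*) [Field F] [CharZero F]
variable (L : Type*) [LieRing L] [LieAlgebra F L]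

/-- The bracket of `L` as a bilinear map (`x ↦ ad x`). -/
noncomputable def adL : L →ₗ[F] (L →ₗ[F] L) := (LieAlgebra.ad F L).toLinearMap

/-- Diagonal adjoint action of `L` on `L ⊗ L`, linear in the acting element. -/
noncomputable def actT : L →ₗ[F] ((L ⊗[F] L) →ₗ[F] (L ⊗[F] L)) :=
  (LinearMap.rTensorHom L + LinearMap.lTensorHom L).comp (adL F L)

/-- Diagonal adjoint action of `L` on `L ⊗ L ⊗ L`. -/
noncomputable def actT3 (x : L) :
    (L ⊗[F] (L ⊗[F] L)) →ₗ[F] (L ⊗[F] (L ⊗[F] L)) :=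
  LinearMap.rTensor _ (adL F L x) + LinearMap.lTensor _ (actT F L x)

/-- The twist map `τ(u ⊗ v) = v ⊗ u`. -/
noncomputable def twT : (L ⊗[F] L) →ₗ[F] (L ⊗[F] L) :=
  (TensorProduct.comm F L L).toLinearMap

/-- Cyclic permutation of the coordinates of `L ⊗ L ⊗ L`. -/
noncomputable def cycT : (L ⊗[F] (L ⊗[F] L)) →ₗ[F] (L ⊗[F] (L ⊗[F] L)) :=
  (TensorProduct.comm F (L ⊗[F] L) L).toLinearMap.comp
    (TensorProduct.assoc F L L L).symm.toLinearMap

/-- The bracket as a linear map `L ⊗ L → L`. -/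
noncomputable def BkT : (L ⊗[F] L) →ₗ[F] L := TensorProduct.lift (adL F L)

/-- `(a⊗b)⊗(a'⊗b') ↦ [a,a']⊗b⊗b'`, giving `[r¹²,r¹³]`. -/
noncomputable def cT1213 :
    ((L ⊗[F] L) ⊗[F] (L ⊗[F] L)) →ₗ[F] (L ⊗[F] (L ⊗[F] L)) :=
  (TensorProduct.map (BkT F L) LinearMap.id).comp
    (TensorProduct.tensorTensorTensorComm F L L L L).toLinearMap

/-- `(a⊗b)⊗(a'⊗b') ↦ a⊗[b,a']⊗b'`, giving `[r¹²,r²³]`. -/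
noncomputable def cT1223 :
    ((L ⊗[F] L) ⊗[F] (L ⊗[F] L)) →ₗ[F] (L ⊗[F] (L ⊗[F] L)) :=
  (LinearMap.lTensor L
      ((TensorProduct.map (BkT F L) LinearMap.id).comp
        (TensorProduct.assoc F L L L).symm.toLinearMap)).comp
    (TensorProduct.assoc F L L (L ⊗[F] L)).toLinearMap

/-- `(a⊗b)⊗(a'⊗b') ↦ a⊗a'⊗[b,b']`, giving `[r¹³,r²³]`. -/
noncomputable def cT1323 :
    ((L ⊗[F] L) ⊗[F] (L ⊗[F] L)) →ₗ[F] (L ⊗[F] (L ⊗[F] L)) :=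
  ((TensorProduct.assoc F L L L).toLinearMap.comp
    (TensorProduct.map LinearMap.id (BkT F L))).comp
    (TensorProduct.tensorTensorTensorComm F L L L L).toLinearMap

/-- `c(r) = [r¹²,r¹³] + [r¹²,r²³] + [r¹³,r²³]` (lying in `L ⊗ L ⊗ L`). -/
noncomputable def cYBT (r : L ⊗[F] L) : L ⊗[F] (L ⊗[F] L) :=
  cT1213 F L (r ⊗ₜ[F] r) + cT1223 F L (r ⊗ₜ[F] r) + cT1323 F L (r ⊗ₜ[F] r)

/-- The coboundary `Δ_r(x) = x·r` as a linear map. -/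
noncomputable def Δr (r : L ⊗[F] L) : L →ₗ[F] (L ⊗[F] L) :=
  (actT F L).flip r

end

section

variable {F : Type*} [Field F] {L : Type*} [LieRing L] [LieAlgebra F L]

@[simp]
lemma adL_apply (x y : L) : adL F L x y = ⁅x, y⁆ := rfl

@[simp]
lemma actT_apply (x : L) (m : L ⊗[F] L) : actT F L x m = ⁅x, m⁆ := by
  induction m using TensorProduct.induction_on with
  | zero => simp
  | tmul a b => simp [actT, LieModule.lie_tmul_right]
  | add p q hp hq => simp only [map_add, hp, hq, lie_add]

@[simp]
lemma actT3_apply (x : L) (w : L ⊗[F] (L ⊗[F] L)) : actT3 F L x w = ⁅x, w⁆ := by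
  induction w using TensorProduct.induction_on with
  | zero => simp
  | tmul a m => simp [actT3, LieModule.lie_tmul_right]
  | add p q hp hq => simp only [map_add, hp, hq, lie_add]

@[simp]
lemma Δr_apply (r : L ⊗[F] L) (x : L) : Δr F L r x = ⁅x, r⁆ := actT_apply x r

lemma Δr_add (s t : L ⊗[F] L) : Δr F L (s + t) = Δr F L s + Δr F L t :=
  map_add (actT F L).flip s t

lemma Δr_smul (c : F) (s : L ⊗[F] L) : Δr F L (c • s) = c • Δr F L s :=
  map_smul (actT F L).flip c s

lemma twT_lie (x : L) (m : L ⊗[F] L) : twT F L ⁅x, m⁆ = ⁅x, twT F L m⁆ := by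
  induction m using TensorProduct.induction_on with
  | zero => simp
  | tmul a b => simp [twT, LieModule.lie_tmul_right, add_comm]
  | add p q hp hq => simp only [map_add, hp, hq, lie_add]

lemma cycT_tmul (a b c : L) : cycT F L (a ⊗ₜ (b ⊗ₜ c)) = c ⊗ₜ (a ⊗ₜ b) := rfl

lemma cT1213_tmul (a b c d : L) :
    cT1213 F L ((a ⊗ₜ b) ⊗ₜ (c ⊗ₜ d)) = ⁅a, c⁆ ⊗ₜ (b ⊗ₜ d) := rfl

lemma cT1223_tmul (a b c d : L) :
    cT1223 F L ((a ⊗ₜ b) ⊗ₜ (c ⊗ₜ d)) = a ⊗ₜ (⁅b, c⁆ ⊗ₜ d) := rfl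

lemma cT1323_tmul (a b c d : L) :
    cT1323 F L ((a ⊗ₜ b) ⊗ₜ (c ⊗ₜ d)) = a ⊗ₜ (c ⊗ₜ ⁅b, d⁆) := rfl

end

section

variable (F : Type*) [Field F] (L : Type*) [LieRing L] [LieAlgebra F L]

noncomputable def cycSum : (L ⊗[F] (L ⊗[F] L)) →ₗ[F] (L ⊗[F] (L ⊗[F] L)) :=
  LinearMap.id + cycT F L + cycT F L ∘ₗ cycT F L

noncomputable def coJacobiForm (x : L) :
    (L ⊗[F] L) →ₗ[F] (L ⊗[F] L) →ₗ[F] L ⊗[F] (L ⊗[F] L) :=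
  LinearMap.mk₂ F (fun s t => cycSum F L (LinearMap.lTensor L (Δr F L t) (Δr F L s x)))
    (by intros; simp [lie_add]) (by intros; simp [lie_smul])
    (by intros; simp [Δr_add, LinearMap.lTensor_add])
    (by intros; simp [Δr_smul, LinearMap.lTensor_smul])

noncomputable def cybForm : (L ⊗[F] L) →ₗ[F] (L ⊗[F] L) →ₗ[F] L ⊗[F] (L ⊗[F] L) :=
  (TensorProduct.mk F _ _).compr₂ (cT1213 F L + cT1223 F L + cT1323 F L)

noncomputable def coJacobiDefect (x : L) :
    (L ⊗[F] L) →ₗ[F] (L ⊗[F] L) →ₗ[F] L ⊗[F] (L ⊗[F] L) :=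
  coJacobiForm F L x - (cybForm F L).compr₂ (actT3 F L x)

end

section

variable {F : Type*} [Field F] {L : Type*} [LieRing L] [LieAlgebra F L]

lemma coJacobiDefect_add_swap_tmul_sub_tmul (x a b c d : L) :
    coJacobiDefect F L x (a ⊗ₜ b - b ⊗ₜ a) (c ⊗ₜ d - d ⊗ₜ c)
      + coJacobiDefect F L x (c ⊗ₜ d - d ⊗ₜ c) (a ⊗ₜ b - b ⊗ₜ a) = 0 := by
  simp only [coJacobiDefect, coJacobiForm, cybForm, cycSum, LinearMap.sub_apply,
    LinearMap.mk₂_apply, LinearMap.compr₂_apply, TensorProduct.mk_apply, LinearMap.add_apply,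
    LinearMap.id_apply, LinearMap.comp_apply, Δr_apply, actT3_apply, LieModule.lie_tmul_right,
    LinearMap.lTensor_tmul, map_sub, map_add, lie_add, cycT_tmul, cT1213_tmul, cT1223_tmul,
    cT1323_tmul, tmul_sub, tmul_add, lie_lie]
  have jacobi (y p q : L) : ⁅q, ⁅y, p⁆⁆ = ⁅p, ⁅y, q⁆⁆ - ⁅y, ⁅p, q⁆⁆ := by
    rw [← lie_skew, lie_lie]; abel
  -- normal form: double brackets only as `⁅x, ⁅p, q⁆⁆` and `⁅p, ⁅x, q⁆⁆`, with `p` before `q`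
  simp only [← lie_skew c a, ← lie_skew d a, ← lie_skew c b, ← lie_skew d b,
    jacobi x a c, jacobi x b c, jacobi x a d, jacobi x b d, lie_neg, neg_tmul, tmul_neg,
    tmul_sub, sub_tmul]
  abel

lemma coJacobiDefect_add_swap_sub_twT (x : L) (u v : L ⊗[F] L) :
    coJacobiDefect F L x (u - twT F L u) (v - twT F L v)
      + coJacobiDefect F L x (v - twT F L v) (u - twT F L u) = 0 := by
  let D := coJacobiDefect F L x
  have h : (D + D.flip).compl₁₂ (LinearMap.id - twT F L) (LinearMap.id - twT F L) = 0 := by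
    refine TensorProduct.ext' fun a b => TensorProduct.ext' fun c d => ?_
    simp only [LinearMap.compl₁₂_apply, LinearMap.sub_apply, LinearMap.id_apply,
      LinearMap.add_apply, LinearMap.flip_apply, LinearMap.zero_apply]
    exact coJacobiDefect_add_swap_tmul_sub_tmul x a b c d
  simpa only [LinearMap.compl₁₂_apply, LinearMap.sub_apply, LinearMap.id_apply,
    LinearMap.add_apply, LinearMap.flip_apply, LinearMap.zero_apply] using LinearMap.congr_fun₂ h u v

lemma cycSum_lTensor_Δr_eq_actT3_cYBT [NeZero (2 : F)] {r : L ⊗[F] L}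
    (hr : ∃ u, r = u - twT F L u) (x : L) :
    cycSum F L (LinearMap.lTensor L (Δr F L r) (Δr F L r x)) = actT3 F L x (cYBT F L r) := by
  obtain ⟨u, rfl⟩ := hr
  have h := coJacobiDefect_add_swap_sub_twT x u u
  rw [← two_smul F, smul_eq_zero_iff_right two_ne_zero] at h
  exact sub_eq_zero.mp h

end

section

variable (F : Type*) [Field F] [CharZero F]
variable (L : Type*) [LieRing L] [LieAlgebra F L]

/-- Drinfeld: for antisymmetric `r ∈ Im(1⊗1 − τ)`, the coboundary
`Δ_r(x) = x·r` makes `(L, φ, Δ_r)` a Lie bialgebra iff `x·c(r) = 0` for all `x ∈ L`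
(the modified Yang–Baxter equation). -/
theorem coboundary_bialgebra_iff_MYBE (r : L ⊗[F] L)
    (hr : ∃ u, r = u - twT F L u) :
    ((∀ x, ∃ u, Δr F L r x = u - twT F L u) ∧
      (∀ x, (LinearMap.lTensor L (Δr F L r)) (Δr F L r x)
          + cycT F L ((LinearMap.lTensor L (Δr F L r)) (Δr F L r x))
          + cycT F L (cycT F L ((LinearMap.lTensor L (Δr F L r)) (Δr F L r x))) = 0) ∧
      (∀ x y, Δr F L r ⁅x, y⁆ = actT F L x (Δr F L r y) - actT F L y (Δr F L r x)))
    ↔ (∀ x : L, actT3 F L x (cYBT F L r) = 0) := by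
  have hcoJacobi (x : L) := cycSum_lTensor_Δr_eq_actT3_cYBT hr x
  refine ⟨fun h x => (hcoJacobi x).symm.trans (h.2.1 x),
    fun h => ⟨?_, fun x => (hcoJacobi x).trans (h x), ?_⟩⟩
  · obtain ⟨u, rfl⟩ := hr
    exact fun x => ⟨⁅x, u⁆, by rw [Δr_apply, lie_sub, twT_lie]⟩
  · intro x y
    simp only [Δr_apply, actT_apply]
    exact lie_lie x y r

end
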